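/- Let ⟨μ,ξ⟩ = (ξ,ω) be any marked partition of type C of n with ω ≠ ∅. Then d_S⟨μ,ξ⟩ ≥ ((μ⁺)*)_B in dominance order; that is, ((ξ ∪ (ω⁺)_B)*)_B ≥ ((μ⁺)*)_B. -/

import Mathlib

namespace NilDual

/-- A "partition" is encoded as a multiset of natural numbers (its parts). -/
abbrev Ptn := Multiset ℕ

/-- All parts are positive. -/
def IsPartition (l : Ptn) : Prop := ∀ a ∈ l, 0 < a

/-- `height l a` is the number of parts of `l` that are ≥ `a`. -/
def height (l : Ptn) (a : ℕ) : ℕ := Multiset.card (l.filter (fun p => a ≤ p))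

/-- `psum l j` is the sum of the `j` largest parts of `l`. -/
def psum (l : Ptn) (j : ℕ) : ℕ := ∑ a ∈ Finset.Icc 1 l.sum, min j (height l a)

/-- `Dom l m` means `l ≤ m` in the dominance order. -/
def Dom (l m : Ptn) : Prop := ∀ j : ℕ, psum l j ≤ psum m j

/-- The transpose (conjugate) partition. -/
def transpose (l : Ptn) : Ptn :=
  Multiset.filter (fun x => 0 < x)
    (Multiset.map (fun a => height l a) (Finset.Icc 1 l.sum).val)

/-- The largest part (0 for the empty partition). -/
def maxPart (l : Ptn) : ℕ := l.sup

/-- The smallest part (0 for the empty partition). -/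
noncomputable def minPart (l : Ptn) : ℕ := sInf {a : ℕ | a ∈ l}

/-- `λ⁺`: add 1 to the largest part. -/
def up (l : Ptn) : Ptn := (maxPart l + 1) ::ₘ l.erase (maxPart l)

/-- `λ⁻`: subtract 1 from the smallest part, deleting it if it becomes 0. -/
noncomputable def down (l : Ptn) : Ptn :=
  if minPart l ≤ 1 then l.erase (minPart l)
  else (minPart l - 1) ::ₘ l.erase (minPart l)

/-- The join `λ ∨ μ = (λ* ∪ μ*)*`. -/
def pjoin (l m : Ptn) : Ptn := transpose (transpose l + transpose m)

/-- `λ₋ = (λ*⁻)*`. -/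
noncomputable def lowerStar (l : Ptn) : Ptn := transpose (down (transpose l))

inductive PType | B | C | D
deriving DecidableEq

/-- Parts of this parity must occur with even multiplicity in a partition of type `X`. -/
def badPart : PType → ℕ → Prop
  | PType.B, a => Even a
  | PType.C, a => Odd a
  | PType.D, a => Even a

/-- Membership in `𝒫_X` (sum unconstrained). -/
def InP (X : PType) (l : Ptn) : Prop :=
  IsPartition l ∧ ∀ a : ℕ, badPart X a → Even (l.count a)

/-- The parity of `n` required for `𝒫_X(n)` to be defined. -/
def sumParity : PType → ℕ → Prop
  | PType.B, n => Odd n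
  | PType.C, n => Even n
  | PType.D, n => Even n

/-- `m` is the X-collapse of `l`: `m ∈ 𝒫_X(|l|)`, `m ≤ l` in dominance order, and `m`
dominates every member of `𝒫_X(|l|)` that is dominated by `l`. -/
def IsCollapse (X : PType) (l m : Ptn) : Prop :=
  InP X m ∧ m.sum = l.sum ∧ Dom m l ∧
    ∀ ν : Ptn, InP X ν → ν.sum = l.sum → Dom ν l → Dom ν m

def CollapseDefined (X : PType) (l : Ptn) : Prop := ∃ m, IsCollapse X l m

open Classical in
/-- The X-collapse `λ_X` (junk value `0` if it does not exist). -/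
noncomputable def collapse (X : PType) (l : Ptn) : Ptn :=
  if h : CollapseDefined X l then h.choose else 0

/-- `l` is superior to `m`: smallest part of `l` ≥ largest part of `m`. -/
def Superior (l m : Ptn) : Prop := maxPart m ≤ minPart l

def EvenlySuperior (l m : Ptn) : Prop := ∃ k : ℕ, Even k ∧ maxPart m ≤ k ∧ k ≤ minPart l

def OddlySuperior (l m : Ptn) : Prop := ∃ k : ℕ, Odd k ∧ maxPart m ≤ k ∧ k ≤ minPart l

/-- The parity required of marked parts in type `X`. -/
def markParity : PType → ℕ → Prop
  | PType.C, a => Even a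
  | _, a => Odd a

/-- `(ν, η)` is a marked partition of type `X`, with underlying partition `λ = ν + η`. -/
def IsMarked (X : PType) (nu eta : Ptn) : Prop :=
  InP X (nu + eta) ∧ sumParity X (nu + eta).sum ∧
  (∀ a ∈ nu, nu.count a = 1 ∧ markParity X a) ∧
  ((X = PType.B ∨ X = PType.D) → Even (Multiset.card nu))

/-- The Sommers duality map `d_S` on marked partitions `(ν, η)`. -/
noncomputable def dS (X : PType) (nu eta : Ptn) : Ptn :=
  match X with
  | PType.B => collapse PType.C (transpose (nu + collapse PType.C (down eta)))
  | PType.C => collapse PType.B (transpose (nu + collapse PType.B (up eta)))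
  | PType.D =>
      collapse PType.D (transpose (nu + transpose (collapse PType.D (transpose eta))))

/-- `a` is a markable part of `l` in type `X`. -/
def Markable (X : PType) (l : Ptn) (a : ℕ) : Prop :=
  a ∈ l ∧ markParity X a ∧
    (match X with
     | PType.B => Odd (height l a)
     | PType.C => Even (height l a)
     | PType.D => Even (height l a))

/-- The marked partition `⟨l, ν⟩` is reduced. -/
def Reduced (X : PType) (l nu : Ptn) : Prop := ∀ a ∈ nu, Markable X l a

/-- The parts entering the definition of a special marked partition:
even of odd height (B), odd of even height (C), even of even height (D). -/
def AntiPart (X : PType) (l : Ptn) (a : ℕ) : Prop :=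
  match X with
  | PType.B => Even a ∧ Odd (height l a)
  | PType.C => Odd a ∧ Even (height l a)
  | PType.D => Even a ∧ Even (height l a)

/-- The reduced marked partition `⟨l, ν⟩` is special. -/
def SpecialMP (X : PType) (l nu : Ptn) : Prop :=
  ∀ a ∈ l, AntiPart X l a → Even (height nu a)

/-- `a` is the largest part of `l` whose height satisfies `P`. -/
def LargestWith (l : Ptn) (P : ℕ → Prop) (a : ℕ) : Prop :=
  a ∈ l ∧ P (height l a) ∧ ∀ b ∈ l, P (height l b) → b ≤ a

/-- Height parity for the top marked part in a basic block. -/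
def heightParity : PType → ℕ → Prop
  | PType.B => fun n => Odd n
  | _ => fun n => Even n

/-- A basic block of type `X`. -/
def BasicBlock (X : PType) (nu eta : Ptn) : Prop :=
  IsMarked X nu eta ∧
  ((∃ n1 n2 : ℕ, n1 < n2 ∧ nu = {n2, n1} ∧ n1 = minPart (nu + eta) ∧
      LargestWith (nu + eta) (heightParity X) n2) ∨
   (X = PType.C ∧ ∃ n2 : ℕ, nu = {n2} ∧ LargestWith (nu + eta) (heightParity X) n2))

/-- An ultrabasic block: a basic block with `n₁ ≤ 1`. -/
def Ultrabasic (X : PType) (nu eta : Ptn) : Prop :=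
  BasicBlock X nu eta ∧ (Multiset.card nu = 2 → minPart nu ≤ 1)

/-!
Transposition reverses dominance between partitions of the same size, dominance is compatible
with union, and adding a box to the largest part of `μ = ξ ∪ ω` dominates adding it to the
largest part of `ω`. Hence `ξ ∪ (ω⁺)_B ≤ ξ ∪ ω⁺ ≤ μ⁺`, so `((μ⁺)*)_B` is a member of `𝒫_B`
dominated by `(ξ ∪ (ω⁺)_B)*`, and the maximality defining the B-collapse of the latter gives the
claim.

The real work is the existence of B-collapses of partitions `λ` of odd size `n`. The members
of `𝒫_B(n)` dominated by `λ` are closed under the dominance join, the partition whose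
conjugate partial sums are the pointwise minimum of theirs: for partitions of odd size,
lying in `𝒫_B` amounts to these sums being odd at odd indices, a property preserved by the
minimum. A member maximizing `∑ j, σ_j` is then the greatest one.
-/

open Finset

lemma height_antitone (l : Ptn) : Antitone (height l) := fun _ _ hab =>
  Multiset.card_le_card (Multiset.monotone_filter_right l fun _ hp => hab.trans hp)

lemma height_cons (x : ℕ) (l : Ptn) (a : ℕ) :
    height (x ::ₘ l) a = (if a ≤ x then 1 else 0) + height l a := by
  simp only [height, Multiset.filter_cons]
  split <;> simp [Nat.add_comm]

lemma height_add (l m : Ptn) (a : ℕ) : height (l + m) a = height l a + height m a := by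
  simp [height, Multiset.filter_add]

lemma height_sum {ι : Type*} (s : Finset ι) (f : ι → Ptn) (a : ℕ) :
    height (∑ i ∈ s, f i) a = ∑ i ∈ s, height (f i) a := by
  induction s using Finset.cons_induction with
  | empty => simp [height]
  | cons i s hi ih => rw [sum_cons, sum_cons, height_add, ih]

lemma height_replicate (n b a : ℕ) :
    height (Multiset.replicate n b) a = if a ≤ b then n else 0 := by
  induction n with
  | zero => simp [height]
  | succ n ih => rw [Multiset.replicate_succ, height_cons, ih]; split_ifs <;> omega

lemma count_add_height_succ (l : Ptn) (a : ℕ) : l.count a + height l (a + 1) = height l a := by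
  induction l using Multiset.induction with
  | empty => simp [height]
  | cons x s ih => rw [height_cons, height_cons, Multiset.count_cons]; split_ifs <;> omega

lemma height_eq_zero_of_sum_lt {l : Ptn} {a : ℕ} (h : l.sum < a) : height l a = 0 := by
  rw [height, Multiset.card_eq_zero, Multiset.filter_eq_nil]
  exact fun p hp hap => absurd (hap.trans (Multiset.le_sum_of_mem hp)) (by omega)

lemma height_le_sum (l : Ptn) {a : ℕ} (ha : 1 ≤ a) : height l a ≤ l.sum := by
  induction l using Multiset.induction with
  | empty => simp [height]
  | cons x s ih => rw [height_cons, Multiset.sum_cons]; split_ifs <;> omega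

lemma card_filter_le_Icc (k N x : ℕ) : #{b ∈ Icc k N | b ≤ x} = min x N + 1 - k := by
  rw [show {b ∈ Icc k N | b ≤ x} = Icc k (min x N) by ext; simp only [mem_filter, mem_Icc]; omega,
    Nat.card_Icc]

lemma sum_height_Icc_succ (l : Ptn) (j N : ℕ) :
    ∑ b ∈ Icc (j + 1) N, height l b = (l.map fun p => min p N - j).sum := by
  induction l using Multiset.induction with
  | empty => simp [height]
  | cons x s ih =>
    have hrow : ∑ b ∈ Icc (j + 1) N, (if b ≤ x then 1 else 0) = min x N - j := by
      rw [sum_boole, Nat.cast_id, card_filter_le_Icc]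
      omega
    simp only [height_cons, sum_add_distrib, hrow, ih, Multiset.map_cons, Multiset.sum_cons]

lemma sum_height_eq_sum (l : Ptn) {N : ℕ} (hN : ∀ p ∈ l, p ≤ N) :
    ∑ b ∈ Icc 1 N, height l b = l.sum := by
  rw [sum_height_Icc_succ, ← Multiset.map_id' l]
  congr 1
  refine Multiset.map_congr (by simp) fun p hp => ?_
  have := hN p (by simpa using hp)
  omega

lemma psum_eq_sum_Icc (l : Ptn) (j : ℕ) {N : ℕ} (hN : l.sum ≤ N) :
    psum l j = ∑ a ∈ Icc 1 N, min j (height l a) := by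
  refine sum_subset (Icc_subset_Icc_right hN) fun a ha hna => ?_
  rw [height_eq_zero_of_sum_lt (by simp only [mem_Icc] at ha hna; omega), Nat.min_zero]

@[simp] lemma psum_zero_right (l : Ptn) : psum l 0 = 0 := by simp [psum]

lemma psum_mono (l : Ptn) : Monotone (psum l) := fun _ _ hjk =>
  sum_le_sum fun _ _ => min_le_min_right _ hjk

lemma psum_add_two_add_le (l : Ptn) (j : ℕ) : psum l (j + 2) + psum l j ≤ 2 * psum l (j + 1) := by
  rw [psum, psum, psum, mul_sum, ← sum_add_distrib]
  exact sum_le_sum fun _ _ => by omega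

lemma psum_of_sum_le {l : Ptn} {j : ℕ} (h : l.sum ≤ j) : psum l j = l.sum :=
  (sum_congr rfl fun _ ha => min_eq_right ((height_le_sum l (mem_Icc.1 ha).1).trans h)).trans
    (sum_height_eq_sum l fun _ hp => Multiset.le_sum_of_mem hp)

lemma psum_le_sum (l : Ptn) (j : ℕ) : psum l j ≤ l.sum :=
  (psum_mono l (le_max_left j l.sum)).trans (psum_of_sum_le (le_max_right j l.sum)).le

lemma min_sum_le_sum_min {ι : Type*} (j : ℕ) (s : Finset ι) (f : ι → ℕ) :
    min j (∑ i ∈ s, f i) ≤ ∑ i ∈ s, min j (f i) := by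
  induction s using Finset.cons_induction with
  | empty => simp
  | cons x s hx ih => rw [sum_cons, sum_cons]; omega

lemma min_le_psum (l : Ptn) (j : ℕ) : min j l.sum ≤ psum l j := by
  have := min_sum_le_sum_min j (Icc 1 l.sum) (height l)
  rwa [sum_height_eq_sum l fun _ hp => Multiset.le_sum_of_mem hp] at this

lemma psum_replicate_one (n j : ℕ) : psum (Multiset.replicate n 1) j = min j n := by
  rw [psum, sum_eq_single 1
    (fun a ha ha1 => by
      rw [height_replicate, if_neg (by simp only [mem_Icc] at ha; omega), Nat.min_zero])
    (fun h => by simp_all [height])]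
  simp [height_replicate]

lemma height_transpose (l : Ptn) {r : ℕ} (hr : 1 ≤ r) :
    height (transpose l) r = #{b ∈ Icc 1 l.sum | r ≤ height l b} := by
  rw [height, transpose, Multiset.filter_filter,
    Multiset.filter_congr (q := fun p => r ≤ p) fun p _ => by omega,
    Multiset.filter_map, Multiset.card_map]
  rfl

lemma transpose_sum (l : Ptn) : (transpose l).sum = l.sum := by
  have : (transpose l).sum = ∑ b ∈ Icc 1 l.sum with 0 < height l b, height l b := by
    rw [transpose, Multiset.filter_map]
    rfl
  rw [this, sum_filter_of_ne fun _ _ h => Nat.pos_of_ne_zero h,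
    sum_height_eq_sum l fun _ hp => Multiset.le_sum_of_mem hp]

lemma psum_eq_sum_height_transpose (l : Ptn) (j : ℕ) :
    psum l j = ∑ r ∈ Icc 1 j, height (transpose l) r := by
  have hmin : ∀ x, min j x = ∑ r ∈ Icc 1 j, if r ≤ x then 1 else 0 := fun x => by
    rw [sum_boole, Nat.cast_id, card_filter_le_Icc]
    omega
  simp_rw [psum, hmin]
  rw [sum_comm]
  refine sum_congr rfl fun r hr => ?_
  rw [height_transpose l (mem_Icc.1 hr).1, sum_boole, Nat.cast_id]

lemma le_card_filter_Icc_iff {P : ℕ → Prop} [DecidablePred P] (hP : ∀ a b, a ≤ b → P b → P a)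
    {N a : ℕ} (ha : 1 ≤ a) : a ≤ #{b ∈ Icc 1 N | P b} ↔ a ≤ N ∧ P a := by
  constructor
  · intro h
    by_contra hna
    have hsub : {b ∈ Icc 1 N | P b} ⊆ Icc 1 (a - 1) := fun b hb => by
      simp only [mem_filter, mem_Icc] at hb ⊢
      exact ⟨hb.1.1, by_contra fun hab => hna ⟨by omega, hP a b (by omega) hb.2⟩⟩
    have := card_le_card hsub
    simp only [Nat.card_Icc] at this
    omega
  · rintro ⟨haN, hPa⟩
    have hsub : Icc 1 a ⊆ {b ∈ Icc 1 N | P b} := fun b hb => by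
      simp only [mem_filter, mem_Icc] at hb ⊢
      exact ⟨⟨hb.1, hb.2.trans haN⟩, hP b a hb.2 hPa⟩
    simpa using card_le_card hsub

lemma height_transpose_transpose (l : Ptn) {r : ℕ} (hr : 1 ≤ r) :
    height (transpose (transpose l)) r = height l r := by
  have hiff : ∀ b, 1 ≤ b → (r ≤ height (transpose l) b ↔ b ≤ height l r) := fun b hb => by
    rw [height_transpose l hb,
      le_card_filter_Icc_iff (fun a c hac h => h.trans (height_antitone l hac)) hr]
    refine ⟨And.right, fun h => ⟨by_contra fun hrS => ?_, h⟩⟩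
    rw [height_eq_zero_of_sum_lt (by omega)] at h
    omega
  rw [height_transpose _ hr, transpose_sum, filter_congr fun b hb => hiff b (mem_Icc.1 hb).1,
    card_filter_le_Icc]
  have := height_le_sum l hr
  omega

lemma psum_transpose (l : Ptn) (j : ℕ) : psum (transpose l) j = ∑ r ∈ Icc 1 j, height l r := by
  rw [psum_eq_sum_height_transpose]
  exact sum_congr rfl fun r hr => height_transpose_transpose l (mem_Icc.1 hr).1

lemma psum_transpose_transpose (l : Ptn) (j : ℕ) :
    psum (transpose (transpose l)) j = psum l j := by
  rw [psum_transpose, psum_eq_sum_height_transpose]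

lemma psum_transpose_succ (l : Ptn) (j : ℕ) :
    psum (transpose l) (j + 1) = psum (transpose l) j + height l (j + 1) := by
  rw [psum_transpose, psum_transpose, sum_Icc_succ_top (by omega)]

lemma psum_transpose_add (l m : Ptn) (j : ℕ) :
    psum (transpose (l + m)) j = psum (transpose l) j + psum (transpose m) j := by
  simp only [psum_transpose, height_add, sum_add_distrib]

def excess (l : Ptn) (j : ℕ) : ℕ := (l.map fun p => p - j).sum

lemma psum_transpose_add_excess (l : Ptn) (j : ℕ) : psum (transpose l) j + excess l j = l.sum := by
  have h := sum_height_Icc_succ l 0 j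
  simp only [zero_add, Nat.sub_zero] at h
  rw [psum_transpose, h, excess, ← Multiset.sum_map_add]
  conv_rhs => rw [← Multiset.map_id' l]
  exact congrArg _ (Multiset.map_congr rfl fun p _ => by omega)

lemma excess_eq_sum_height (l : Ptn) (j : ℕ) {N : ℕ} (hN : l.sum ≤ N) :
    excess l j = ∑ a ∈ Icc (j + 1) N, height l a := by
  rw [sum_height_Icc_succ, excess]
  exact congrArg _ (Multiset.map_congr rfl fun p hp => by
    have := (Multiset.le_sum_of_mem hp).trans hN
    omega)

lemma sum_Icc_split (f : ℕ → ℕ) {j N : ℕ} (h : j ≤ N) :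
    ∑ a ∈ Icc 1 N, f a = ∑ a ∈ Icc 1 j, f a + ∑ a ∈ Icc (j + 1) N, f a := by
  rw [← sum_filter_add_sum_filter_not (Icc 1 N) (· ≤ j)]
  congr 2 <;> ext <;> simp only [mem_filter, mem_Icc] <;> omega

lemma psum_le_mul_add_excess (l : Ptn) (j k : ℕ) : psum l k ≤ j * k + excess l j := by
  rw [psum_eq_sum_Icc l k (Nat.le_add_right l.sum j), sum_Icc_split _ (Nat.le_add_left j l.sum),
    excess_eq_sum_height l j (Nat.le_add_right l.sum j)]
  refine add_le_add ((sum_le_sum fun _ _ => min_le_left _ _).trans (by simp)) ?_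
  exact sum_le_sum fun _ _ => min_le_right _ _

lemma psum_height_succ (l : Ptn) (j : ℕ) :
    psum l (height l (j + 1)) = j * height l (j + 1) + excess l j := by
  rw [psum_eq_sum_Icc l _ (Nat.le_add_right l.sum j), sum_Icc_split _ (Nat.le_add_left j l.sum),
    excess_eq_sum_height l j (Nat.le_add_right l.sum j)]
  congr 1
  · rw [sum_congr rfl fun a ha =>
      min_eq_left (height_antitone l (by simp only [mem_Icc] at ha; omega))]
    simp
  · exact sum_congr rfl fun a ha => min_eq_right (height_antitone l (mem_Icc.1 ha).1)

/-- `excess l j = max_k (psum l k - j * k)`, the maximum being attained at `k = height l (j + 1)`;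
hence `excess` is monotone for dominance. -/
lemma excess_le_excess_of_dom {l m : Ptn} (h : Dom l m) (j : ℕ) : excess l j ≤ excess m j := by
  have := psum_height_succ l j
  have := h (height l (j + 1))
  have := psum_le_mul_add_excess m j (height l (j + 1))
  omega

lemma dom_transpose {l m : Ptn} (hs : l.sum = m.sum) (h : Dom l m) :
    Dom (transpose m) (transpose l) := fun j => by
  have := psum_transpose_add_excess l j
  have := psum_transpose_add_excess m j
  have := excess_le_excess_of_dom h j
  omega

lemma dom_iff_psum_transpose_le {l m : Ptn} (hs : l.sum = m.sum) :
    Dom l m ↔ ∀ j, psum (transpose m) j ≤ psum (transpose l) j :=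
  ⟨dom_transpose hs, fun h j => by
    simpa only [psum_transpose_transpose] using
      dom_transpose (by rw [transpose_sum, transpose_sum, hs]) h j⟩

lemma Dom.trans {l m n : Ptn} (h₁ : Dom l m) (h₂ : Dom m n) : Dom l n :=
  fun j => (h₁ j).trans (h₂ j)

lemma dom_add_left (x : Ptn) {y y' : Ptn} (hs : y.sum = y'.sum) (h : Dom y y') :
    Dom (x + y) (x + y') := by
  rw [dom_iff_psum_transpose_le hs] at h
  rw [dom_iff_psum_transpose_le (by simp [hs])]
  intro j
  rw [psum_transpose_add, psum_transpose_add]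
  exact Nat.add_le_add_left (h j) _

lemma maxPart_mem {m : Ptn} (hm : m ≠ 0) : maxPart m ∈ m := by
  obtain ⟨y, hy, hmax⟩ := Multiset.exists_max_image id hm
  rwa [show maxPart m = y from le_antisymm (Multiset.sup_le.2 hmax) (Multiset.le_sup hy)]

lemma sum_up (m : Ptn) : (up m).sum = m.sum + 1 := by
  rcases eq_or_ne m 0 with rfl | hm
  · rfl
  · rw [up, Multiset.sum_cons, ← Multiset.sum_erase (maxPart_mem hm)]
    ring

lemma height_up (m : Ptn) {a : ℕ} (ha : 1 ≤ a) :
    height (up m) a = height m a + if a = maxPart m + 1 then 1 else 0 := by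
  rcases eq_or_ne m 0 with rfl | hm
  · rw [show up 0 = 1 ::ₘ 0 from rfl, height_cons, show maxPart (0 : Ptn) = 0 from rfl]
    split_ifs <;> omega
  · have := height_cons (maxPart m) (m.erase (maxPart m)) a
    rw [Multiset.cons_erase (maxPart_mem hm)] at this
    rw [up, height_cons, this]
    split_ifs <;> omega

lemma psum_transpose_up (m : Ptn) (j : ℕ) :
    psum (transpose (up m)) j = psum (transpose m) j + if maxPart m < j then 1 else 0 := by
  rw [psum_transpose, psum_transpose, sum_congr rfl fun r hr => height_up m (mem_Icc.1 hr).1,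
    sum_add_distrib, sum_ite_eq']
  simp only [mem_Icc]
  split_ifs <;> omega

lemma dom_add_up (x m : Ptn) : Dom (x + up m) (up (x + m)) := by
  rw [dom_iff_psum_transpose_le (by simp [sum_up, add_assoc])]
  intro j
  have : maxPart m ≤ maxPart (x + m) := by simp [maxPart, Multiset.sup_add]
  rw [psum_transpose_up, psum_transpose_add, psum_transpose_add, psum_transpose_up]
  split_ifs <;> omega

lemma odd_psum_transpose_of_inP_B {ν : Ptn} (hν : InP PType.B ν) (hodd : Odd ν.sum)
    {j : ℕ} (hj : Odd j) : Odd (psum (transpose ν) j) := by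
  have hstep : ∀ k, Odd (psum (transpose ν) (j + 2 * k)) ↔ Odd (psum (transpose ν) j) := by
    intro k
    induction k with
    | zero => rfl
    | succ k ih =>
      -- two more columns add `count (j + 2k + 1) + 2 * height (j + 2k + 2)` boxes, an even number
      obtain ⟨c, hc⟩ := hν.2 (j + 2 * k + 1)
        (show Even (j + 2 * k + 1) by obtain ⟨q, rfl⟩ := hj; exact ⟨q + k + 1, by ring⟩)
      have := psum_transpose_succ ν (j + 2 * k)
      have := psum_transpose_succ ν (j + 2 * k + 1)
      have := count_add_height_succ ν (j + 2 * k + 1)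
      rw [← ih, show j + 2 * (k + 1) = j + 2 * k + 1 + 1 by ring, Nat.odd_iff, Nat.odd_iff]
      omega
  rw [← hstep ν.sum, psum_of_sum_le (by rw [transpose_sum]; omega), transpose_sum]
  exact hodd

lemma inP_B_of_odd_psum_transpose {σ : Ptn} (hσ : IsPartition σ)
    (h : ∀ j, Odd j → Odd (psum (transpose σ) j)) : InP PType.B σ := by
  refine ⟨hσ, fun a (ha : Even a) => ?_⟩
  rcases Nat.eq_zero_or_pos a with rfl | hpos
  · rw [Multiset.count_eq_zero.2 fun h0 => (hσ 0 h0).false]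
    exact Even.zero
  · obtain ⟨b, rfl⟩ : ∃ b, a = b + 1 := ⟨a - 1, by omega⟩
    have h1 := h b (by obtain ⟨q, hq⟩ := ha; exact ⟨q - 1, by omega⟩)
    have h2 := h (b + 1 + 1) (by obtain ⟨q, hq⟩ := ha; exact ⟨q, by omega⟩)
    -- `count σ (b + 1)` is the second difference of `psum (transpose σ)` at `b + 1`
    have := psum_transpose_succ σ b
    have := psum_transpose_succ σ (b + 1)
    have := count_add_height_succ σ (b + 1)
    rw [Nat.odd_iff] at h1 h2
    rw [Nat.even_iff]
    omega

lemma sum_Ico_sub_succ_of_antitone {δ : ℕ → ℕ} (hδ : Antitone δ) {a N : ℕ} (h : a ≤ N) :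
    ∑ b ∈ Ico a N, (δ b - δ (b + 1)) = δ a - δ N := by
  induction N, h using Nat.le_induction with
  | base => simp
  | succ N haN ih =>
    rw [sum_Ico_succ_top haN, ih]
    have := hδ haN
    have := hδ (Nat.le_add_right N 1)
    omega

lemma exists_height_succ_eq {δ : ℕ → ℕ} (hδ : Antitone δ) {N : ℕ} (hN : δ N = 0) :
    ∃ σ : Ptn, (∀ p ∈ σ, 1 ≤ p ∧ p ≤ N) ∧ ∀ r, height σ (r + 1) = δ r := by
  refine ⟨∑ b ∈ range N, Multiset.replicate (δ b - δ (b + 1)) (b + 1), fun p hp => ?_, fun r => ?_⟩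
  · obtain ⟨b, hb, hpb⟩ := Multiset.mem_sum.1 hp
    rw [Multiset.eq_of_mem_replicate hpb]
    simp only [mem_range] at hb
    omega
  · simp only [height_sum, height_replicate, add_le_add_iff_right]
    rw [← sum_filter, show {b ∈ range N | r ≤ b} = Ico r N by
      ext; simp only [mem_filter, mem_range, mem_Ico]; omega]
    rcases le_total r N with hrN | hNr
    · rw [sum_Ico_sub_succ_of_antitone hδ hrN, hN, Nat.sub_zero]
    · rw [Ico_eq_empty_of_le hNr, sum_empty]
      have := hδ hNr
      omega

lemma exists_psum_transpose_eq {γ : ℕ → ℕ} (h0 : γ 0 = 0) (hmono : Monotone γ)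
    (hconc : ∀ i, γ (i + 2) + γ i ≤ 2 * γ (i + 1)) {n : ℕ} (hn : γ (n + 1) = γ n) :
    ∃ σ : Ptn, IsPartition σ ∧ σ.sum = γ n ∧ ∀ j, psum (transpose σ) j = γ j := by
  have hδ : Antitone fun r => γ (r + 1) - γ r := antitone_nat_of_succ_le fun i => by
    have : γ (i + 1 + 1) + γ i ≤ 2 * γ (i + 1) := hconc i
    have := hmono (Nat.le_add_right i 1)
    have := hmono (Nat.le_add_right (i + 1) 1)
    omega
  obtain ⟨σ, hσ, hheight⟩ := exists_height_succ_eq hδ (N := n) (by simp [hn])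
  have hpsum : ∀ j, psum (transpose σ) j = γ j := by
    intro j
    induction j with
    | zero => simp [h0]
    | succ j ih =>
      rw [psum_transpose_succ, ih, hheight]
      have := hmono (Nat.le_add_right j 1)
      omega
  refine ⟨σ, fun p hp => (hσ p hp).1, ?_, hpsum⟩
  rw [← hpsum, psum_transpose, sum_height_eq_sum σ fun p hp => (hσ p hp).2]

lemma exists_lub_of_inP_B {ν ν' : Ptn} (hν : InP PType.B ν) (hν' : InP PType.B ν')
    (hodd : Odd ν.sum) (hs : ν'.sum = ν.sum) :
    ∃ σ, InP PType.B σ ∧ σ.sum = ν.sum ∧ Dom ν σ ∧ Dom ν' σ ∧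
      ∀ l : Ptn, l.sum = ν.sum → Dom ν l → Dom ν' l → Dom σ l := by
  set γ := fun j => min (psum (transpose ν) j) (psum (transpose ν') j) with hγ
  have hγn : ∀ j, ν.sum ≤ j → γ j = ν.sum := fun j hj => by
    have h1 : psum (transpose ν) j = ν.sum := by
      rw [psum_of_sum_le (by rwa [transpose_sum]), transpose_sum]
    have h2 : psum (transpose ν') j = ν.sum := by
      rw [psum_of_sum_le (by rwa [transpose_sum, hs]), transpose_sum, hs]
    simp only [hγ, h1, h2, min_self]
  obtain ⟨σ, hσ, hσsum, hσγ⟩ := exists_psum_transpose_eq (γ := γ) (by simp [hγ])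
    (fun i k hik => min_le_min (psum_mono _ hik) (psum_mono _ hik))
    (fun i => by
      have := psum_add_two_add_le (transpose ν) i
      have := psum_add_two_add_le (transpose ν') i
      simp only [hγ]
      omega)
    (n := ν.sum) (by rw [hγn _ (Nat.le_succ _), hγn _ le_rfl])
  rw [hγn _ le_rfl] at hσsum
  refine ⟨σ, inP_B_of_odd_psum_transpose hσ fun j hj => ?_, hσsum, ?_, ?_, fun l hl hνl hν'l => ?_⟩
  · rw [hσγ]
    rcases min_choice (psum (transpose ν) j) (psum (transpose ν') j) with h | h <;>
      simp only [hγ, h]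
    exacts [odd_psum_transpose_of_inP_B hν hodd hj, odd_psum_transpose_of_inP_B hν' (hs ▸ hodd) hj]
  · exact (dom_iff_psum_transpose_le hσsum.symm).2 fun j => by rw [hσγ]; exact min_le_left _ _
  · exact (dom_iff_psum_transpose_le (hs.trans hσsum.symm)).2 fun j => by
      rw [hσγ]; exact min_le_right _ _
  · rw [dom_iff_psum_transpose_le hl.symm] at hνl
    rw [dom_iff_psum_transpose_le (hs.trans hl.symm)] at hν'l
    exact (dom_iff_psum_transpose_le (hσsum.trans hl.symm)).2 fun j => by
      rw [hσγ]; exact le_min (hνl j) (hν'l j)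

lemma exists_greatest_of_directed {S : Set Ptn} {n : ℕ} (hS : ∀ ν ∈ S, ν.sum = n)
    (hne : S.Nonempty) (hdir : ∀ ν ∈ S, ∀ ν' ∈ S, ∃ σ ∈ S, Dom ν σ ∧ Dom ν' σ) :
    ∃ m ∈ S, ∀ ν ∈ S, Dom ν m := by
  set Φ : Ptn → ℕ := fun ν => ∑ j ∈ range (n + 1), psum ν j
  have hbdd : BddAbove (Φ '' S) := ⟨(n + 1) * n, by
    rintro _ ⟨ν, hν, rfl⟩
    calc Φ ν ≤ ∑ _j ∈ range (n + 1), n :=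
          sum_le_sum fun j _ => (psum_le_sum ν j).trans (hS ν hν).le
      _ = (n + 1) * n := by simp⟩
  obtain ⟨m, hm, hΦm⟩ := Nat.sSup_mem (hne.image Φ) hbdd
  refine ⟨m, hm, fun ν hν => ?_⟩
  obtain ⟨σ, hσ, hνσ, hmσ⟩ := hdir ν hν m hm
  have hΦ : Φ m = Φ σ :=
    le_antisymm (sum_le_sum fun j _ => hmσ j) (hΦm ▸ le_csSup hbdd ⟨σ, hσ, rfl⟩)
  have heq := (sum_eq_sum_iff_of_le fun j _ => hmσ j).1 hΦ
  intro j
  rcases le_or_gt j n with hj | hj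
  · exact (hνσ j).trans (heq j (mem_range.2 (by omega))).ge
  · rw [psum_of_sum_le (l := m) (by rw [hS m hm]; omega), hS m hm, ← hS ν hν]
    exact psum_le_sum ν j

lemma isCollapse_collapse {X : PType} {l : Ptn} (h : CollapseDefined X l) :
    IsCollapse X l (collapse X l) := by
  rw [collapse, dif_pos h]
  exact h.choose_spec

lemma inP_B_replicate_one (n : ℕ) : InP PType.B (Multiset.replicate n 1) :=
  ⟨fun a ha => by rw [Multiset.eq_of_mem_replicate ha]; exact one_pos,
    fun a (ha : Even a) => by
      rw [Multiset.count_eq_zero.2 fun h1 => by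
        rw [Multiset.eq_of_mem_replicate h1] at ha; exact Nat.not_even_one ha]
      exact Even.zero⟩

lemma collapseDefined_B {l : Ptn} (hl : Odd l.sum) : CollapseDefined PType.B l := by
  obtain ⟨m, ⟨hmB, hmsum, hml⟩, hmax⟩ := exists_greatest_of_directed
    (S := {ν | InP PType.B ν ∧ ν.sum = l.sum ∧ Dom ν l}) (fun ν hν => hν.2.1)
    ⟨_, inP_B_replicate_one l.sum, by simp,
      fun j => by rw [psum_replicate_one]; exact min_le_psum l j⟩
    (by
      rintro ν ⟨hν, hνs, hνl⟩ ν' ⟨hν', hν's, hν'l⟩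
      obtain ⟨σ, hσ, hσs, hνσ, hν'σ, hσl⟩ :=
        exists_lub_of_inP_B hν hν' (hνs ▸ hl) (hν's.trans hνs.symm)
      exact ⟨σ, ⟨hσ, hσs.trans hνs, hσl l hνs.symm hνl hν'l⟩, hνσ, hν'σ⟩)
  exact ⟨m, hmB, hmsum, hml, fun ν hν hνs hνl => hmax ν ⟨hν, hνs, hνl⟩⟩

theorem dS_typeC_lower_bound_general (xi omega : Ptn)
    (h : IsMarked PType.C xi omega) :
    Dom (collapse PType.B (transpose (up (xi + omega)))) (dS PType.C xi omega) := by
  obtain ⟨-, hμ : Even (xi + omega).sum, hmarked, -⟩ := h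
  have hxi : Even xi.sum :=
    Multiset.sum_induction Even xi (fun _ _ => Even.add) Even.zero fun a ha => (hmarked a ha).2
  have hω : Even omega.sum := by
    rw [Multiset.sum_add] at hμ
    exact (Nat.even_add.1 hμ).1 hxi
  obtain ⟨-, hκsum, hκdom, -⟩ := isCollapse_collapse
    (collapseDefined_B (l := up omega) (by rw [sum_up]; exact hω.add_one))
  set κ := collapse PType.B (up omega)
  have hsum : (xi + κ).sum = (up (xi + omega)).sum := by
    simp only [Multiset.sum_add, hκsum, sum_up]
    ring
  have hodd : Odd (up (xi + omega)).sum := by rw [sum_up]; exact hμ.add_one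
  obtain ⟨hLB, hLsum, hLdom, -⟩ := isCollapse_collapse
    (collapseDefined_B (l := transpose (up (xi + omega))) (by rwa [transpose_sum]))
  obtain ⟨-, -, -, hRmax⟩ := isCollapse_collapse
    (collapseDefined_B (l := transpose (xi + κ)) (by rwa [transpose_sum, hsum]))
  exact hRmax _ hLB (by rw [hLsum, transpose_sum, transpose_sum, hsum])
    (hLdom.trans (dom_transpose hsum ((dom_add_left xi hκsum hκdom).trans (dom_add_up xi omega))))

/-- From the proof of Lemma 5.12 of the paper: for any type-C marked partition
`⟨μ,ξ⟩ = (ξ,ω)` with `ω ≠ ∅`, one has `d_S⟨μ,ξ⟩ ≥ ((μ⁺)*)_B`. -/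
theorem dS_typeC_lower_bound (xi omega : Ptn)
    (h : IsMarked PType.C xi omega) (hne : omega ≠ 0) :
    Dom (collapse PType.B (transpose (up (xi + omega)))) (dS PType.C xi omega) :=
  dS_typeC_lower_bound_general xi omega h

end NilDual
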